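/- arXiv:2008.00560 — 13 statements merged into one kernel-verified Lean document; each statement's English description precedes it below -/
import Mathlib

section
/- Let A be a nonassociative algebra over a field K of characteristic 0 with bilinear multiplication ∗. For each X ∈ A, the endomorphism L_X − R_X defined by (L_X − R_X)(Y) = X∗Y − Y∗X is a derivation of (A,∗) for every X ∈ A if and only if (A,∗) is weakly associative. -/
theorem commutator_derivation_defect {R A : Type*} [CommSemiring R] [AddCommGroup A] [Module R A]
    (mul : A →ₗ[R] A →ₗ[R] A) (X Y Z : A) :
    (mul X (mul Y Z) - mul (mul Y Z) X) -
        (mul (mul X Y - mul Y X) Z + mul Y (mul X Z - mul Z X)) =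
      (mul X (mul Y Z) - mul (mul X Y) Z)
        + (mul Y (mul Z X) - mul (mul Y Z) X)
        - (mul Y (mul X Z) - mul (mul Y X) Z) := by
  simp only [map_sub, LinearMap.sub_apply]
  abel

theorem stmt_0_general {K A : Type*} [Field K] [AddCommGroup A] [Module K A]
    (mul : A →ₗ[K] A →ₗ[K] A) :
    (∀ X Y Z : A,
      mul X (mul Y Z) - mul (mul Y Z) X =
        mul (mul X Y - mul Y X) Z + mul Y (mul X Z - mul Z X)) ↔
    (∀ X Y Z : A,
      (mul X (mul Y Z) - mul (mul X Y) Z)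
        + (mul Y (mul Z X) - mul (mul Y Z) X)
        - (mul Y (mul X Z) - mul (mul Y X) Z) = 0) := by
  simp only [← commutator_derivation_defect, sub_eq_zero]

/-- For a nonassociative algebra `(A, ∗)` over a field `K` of characteristic zero,
the endomorphism `L_X − R_X : Y ↦ X∗Y − Y∗X` is a derivation for every `X`
if and only if `(A, ∗)` is weakly associative. -/
theorem stmt_0 {K A : Type*} [Field K] [CharZero K] [AddCommGroup A] [Module K A]
    (mul : A →ₗ[K] A →ₗ[K] A) :
    (∀ X Y Z : A,
      mul X (mul Y Z) - mul (mul Y Z) X =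
        mul (mul X Y - mul Y X) Z + mul Y (mul X Z - mul Z X)) ↔
    (∀ X Y Z : A,
      (mul X (mul Y Z) - mul (mul X Y) Z)
        + (mul Y (mul Z X) - mul (mul Y Z) X)
        - (mul Y (mul X Z) - mul (mul Y X) Z) = 0) :=
  stmt_0_general mul
end

section
/- Let (A, •, [ , ]) be a nonassociative Poisson algebra over a field K of characteristic 0, and define on A the multiplication X∗Y = X•Y + [X,Y] (the depolarization). Then the algebra (A,∗) is weakly associative. -/
/-!
The associator of `X ∗ Y = X • Y + [X, Y]` is the sum of the associators of `•` and of
`[ , ]`: the four mixed terms `X • [Y, Z] - [X, Y] • Z + [X, Y • Z] - [X • Y, Z]` cancel by the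
Leibniz rule (applied in both slots) and commutativity. Weak associativity is linear in the
associator, so it suffices for `•` and `[ , ]` separately. For a commutative product the six
terms cancel in pairs; for a Lie bracket, antisymmetry turns the weak associator into minus
twice the Jacobiator.
-/

namespace LinearMap

variable {R M : Type*} [CommSemiring R] [AddCommGroup M] [Module R M]

def associator (μ : M →ₗ[R] M →ₗ[R] M) (x y z : M) : M := μ x (μ y z) - μ (μ x y) z

def IsWeaklyAssociative (μ : M →ₗ[R] M →ₗ[R] M) : Prop :=
  ∀ x y z : M, μ.associator x y z + μ.associator y z x - μ.associator y x z = 0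

theorem IsWeaklyAssociative.of_comm {μ : M →ₗ[R] M →ₗ[R] M}
    (hcomm : ∀ x y, μ x y = μ y x) :
    μ.IsWeaklyAssociative := by
  intro x y z
  simp only [associator]
  rw [hcomm (μ y z) x, hcomm y x, hcomm z x]
  abel

theorem IsWeaklyAssociative.of_skew_of_jacobi {μ : M →ₗ[R] M →ₗ[R] M}
    (hskew : ∀ x y, μ x y = -μ y x)
    (hjacobi : ∀ x y z, μ (μ x y) z + μ (μ y z) x + μ (μ z x) y = 0) :
    μ.IsWeaklyAssociative := by
  intro x y z
  calc μ.associator x y z + μ.associator y z x - μ.associator y x z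
      = -(2 : ℤ) • (μ (μ x y) z + μ (μ y z) x + μ (μ z x) y) := by
        simp only [associator]
        rw [hskew x (μ y z), hskew y (μ z x), hskew y (μ x z), hskew x z, hskew y x]
        simp only [map_neg, neg_apply]
        abel
    _ = 0 := by rw [hjacobi, smul_zero]

theorem IsWeaklyAssociative.of_associator_eq_add {μ ν ρ : M →ₗ[R] M →ₗ[R] M}
    (h : ∀ x y z, μ.associator x y z = ν.associator x y z + ρ.associator x y z)
    (hν : ν.IsWeaklyAssociative) (hρ : ρ.IsWeaklyAssociative) : μ.IsWeaklyAssociative := by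
  intro x y z
  calc μ.associator x y z + μ.associator y z x - μ.associator y x z
      = (ν.associator x y z + ν.associator y z x - ν.associator y x z)
        + (ρ.associator x y z + ρ.associator y z x - ρ.associator y x z) := by
        rw [h, h, h]; abel
    _ = 0 := by rw [hν, hρ, add_zero]

section Poisson

variable {dot br : M →ₗ[R] M →ₗ[R] M}

theorem leibniz_right (hskew : ∀ x y, br x y = -br y x)
    (hleibniz : ∀ x y z, br (dot x y) z = dot x (br y z) + dot (br x z) y) (x y z : M) :
    br x (dot y z) = dot y (br x z) + dot (br x y) z := by
  rw [hskew x, hleibniz, hskew z x, hskew y x]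
  simp only [map_neg, neg_apply]
  abel

theorem associator_add_of_leibniz (hcomm : ∀ x y, dot x y = dot y x)
    (hskew : ∀ x y, br x y = -br y x)
    (hleibniz : ∀ x y z, br (dot x y) z = dot x (br y z) + dot (br x z) y) (x y z : M) :
    (dot + br).associator x y z = dot.associator x y z + br.associator x y z := by
  simp only [associator, add_apply, map_add]
  rw [leibniz_right hskew hleibniz, hleibniz, hcomm (br x z) y]
  abel

end Poisson

end LinearMap

theorem stmt_2_general {K A : Type*} [Field K] [AddCommGroup A] [Module K A]
    (dot br : A →ₗ[K] A →ₗ[K] A)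
    (hcomm : ∀ X Y : A, dot X Y = dot Y X)
    (hskew : ∀ X Y : A, br X Y = - br Y X)
    (hjacobi : ∀ X Y Z : A, br (br X Y) Z + br (br Y Z) X + br (br Z X) Y = 0)
    (hleibniz : ∀ X Y Z : A, br (dot X Y) Z = dot X (br Y Z) + dot (br X Z) Y)
    (star : A → A → A)
    (hstar : ∀ X Y : A, star X Y = dot X Y + br X Y) :
    ∀ X Y Z : A,
      (star X (star Y Z) - star (star X Y) Z)
        + (star Y (star Z X) - star (star Y Z) X)
        - (star Y (star X Z) - star (star Y X) Z) = 0 := by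
  obtain rfl : star = fun X Y => (dot + br) X Y := funext₂ hstar
  exact LinearMap.IsWeaklyAssociative.of_associator_eq_add
    (LinearMap.associator_add_of_leibniz hcomm hskew hleibniz)
    (.of_comm hcomm) (.of_skew_of_jacobi hskew hjacobi)

/-- The depolarization `X ∗ Y = X • Y + [X, Y]` of a nonassociative Poisson algebra
is weakly associative. -/
theorem stmt_2 {K A : Type*} [Field K] [CharZero K] [AddCommGroup A] [Module K A]
    (dot br : A →ₗ[K] A →ₗ[K] A)
    (hcomm : ∀ X Y : A, dot X Y = dot Y X)
    (hskew : ∀ X Y : A, br X Y = - br Y X)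
    (hjacobi : ∀ X Y Z : A, br (br X Y) Z + br (br Y Z) X + br (br Z X) Y = 0)
    (hleibniz : ∀ X Y Z : A, br (dot X Y) Z = dot X (br Y Z) + dot (br X Z) Y)
    (star : A → A → A)
    (hstar : ∀ X Y : A, star X Y = dot X Y + br X Y) :
    ∀ X Y Z : A,
      (star X (star Y Z) - star (star X Y) Z)
        + (star Y (star Z X) - star (star Y Z) X)
        - (star Y (star X Z) - star (star Y X) Z) = 0 :=
  stmt_2_general dot br hcomm hskew hjacobi hleibniz star hstar
end

section
/- A nonassociative algebra (A,∗) over a field K of characteristic 0 is a symmetric Leibniz algebra if and only if for all X,Y,Z ∈ A its associator satisfies A∗(X,Y,Z) = Y∗(X∗Z) and the trilinear map B∗ vanishes: X∗(Y∗Z) + (Y∗Z)∗X = 0. -/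
/-!
Both conditions force every square to annihilate `A` from the left and from the right, so
`a ∗ b` and `b ∗ a` act as negatives of each other on either side. With this skew-symmetry, the
left Leibniz identity rewrites `X ∗ (Y ∗ Z)` as `-((Y ∗ X) ∗ Z + Y ∗ (Z ∗ X))`, which makes the
right Leibniz identity equivalent to `B∗ = 0`; and the left Leibniz identity is just
`A∗(X,Y,Z) = Y ∗ (X ∗ Z)`.
-/

namespace LinearMap

variable {R A : Type*} [CommSemiring R] [AddCommGroup A] [Module R A]
  (mul : A →ₗ[R] A →ₗ[R] A)

def IsLeftLeibniz : Prop :=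
  ∀ X Y Z : A, mul X (mul Y Z) = mul (mul X Y) Z + mul Y (mul X Z)

def IsRightLeibniz : Prop :=
  ∀ X Y Z : A, mul (mul Y Z) X = mul (mul Y X) Z + mul Y (mul Z X)

variable {mul}

theorem isLeftLeibniz_iff_associator :
    IsLeftLeibniz mul ↔ ∀ X Y Z : A, mul X (mul Y Z) - mul (mul X Y) Z = mul Y (mul X Z) :=
  forall₃_congr fun _ _ _ => sub_eq_iff_eq_add'.symm

theorem IsLeftLeibniz.mul_self_mul (h : IsLeftLeibniz mul) (a c : A) : mul (mul a a) c = 0 :=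
  right_eq_add.mp (h a a c)

theorem IsRightLeibniz.mul_mul_self (h : IsRightLeibniz mul) (a c : A) : mul c (mul a a) = 0 :=
  left_eq_add.mp (h a c a)

theorem IsLeftLeibniz.mul_mul_self_of_mul_mul_add_mul_mul_eq_zero (hL : IsLeftLeibniz mul)
    (hB : ∀ X Y Z : A, mul X (mul Y Z) + mul (mul Y Z) X = 0) (a c : A) :
    mul c (mul a a) = 0 := by
  simpa only [hL.mul_self_mul, add_zero] using hB c a a

theorem mul_swap_mul_eq_neg {c : A} (h : ∀ a, mul (mul a a) c = 0) (a b : A) :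
    mul (mul b a) c = -mul (mul a b) c :=
  (IsAlt.neg (B := mul.compr₂ (mul.flip c)) h a b).symm

theorem mul_mul_swap_eq_neg {c : A} (h : ∀ a, mul c (mul a a) = 0) (a b : A) :
    mul c (mul b a) = -mul c (mul a b) :=
  (IsAlt.neg (B := mul.compr₂ (mul c)) h a b).symm

theorem IsLeftLeibniz.mul_mul_add_mul_mul_eq_zero_iff (hL : IsLeftLeibniz mul)
    (hSq : ∀ a c : A, mul c (mul a a) = 0) (X Y Z : A) :
    mul X (mul Y Z) + mul (mul Y Z) X = 0 ↔
      mul (mul Y Z) X = mul (mul Y X) Z + mul Y (mul Z X) := by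
  have hX : mul X (mul Y Z) = -(mul (mul Y X) Z + mul Y (mul Z X)) := by
    rw [hL, mul_swap_mul_eq_neg (hL.mul_self_mul · Z) X Y,
      mul_mul_swap_eq_neg (hSq · Y) X Z, neg_add, neg_neg, neg_neg]
  rw [hX, neg_add_eq_zero, eq_comm]

end LinearMap

theorem stmt_6_general {K A : Type*} [Field K] [AddCommGroup A] [Module K A]
    (mul : A →ₗ[K] A →ₗ[K] A) :
    ((∀ X Y Z : A, mul X (mul Y Z) = mul (mul X Y) Z + mul Y (mul X Z)) ∧
     (∀ X Y Z : A, mul (mul Y Z) X = mul (mul Y X) Z + mul Y (mul Z X))) ↔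
    ((∀ X Y Z : A, mul X (mul Y Z) - mul (mul X Y) Z = mul Y (mul X Z)) ∧
     (∀ X Y Z : A, mul X (mul Y Z) + mul (mul Y Z) X = 0)) := by
  change mul.IsLeftLeibniz ∧ mul.IsRightLeibniz ↔ _
  rw [← LinearMap.isLeftLeibniz_iff_associator]
  constructor
  · rintro ⟨hL, hR⟩
    exact ⟨hL, fun X Y Z =>
      (hL.mul_mul_add_mul_mul_eq_zero_iff hR.mul_mul_self X Y Z).mpr (hR X Y Z)⟩
  · rintro ⟨hL, hB⟩
    have hSq := hL.mul_mul_self_of_mul_mul_add_mul_mul_eq_zero hB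
    exact ⟨hL, fun X Y Z => (hL.mul_mul_add_mul_mul_eq_zero_iff hSq X Y Z).mp (hB X Y Z)⟩

/-- `(A, ∗)` is a symmetric Leibniz algebra iff its associator satisfies
`A∗(X,Y,Z) = Y∗(X∗Z)` and `B∗(X,Y,Z) = X∗(Y∗Z) + (Y∗Z)∗X = 0` for all `X, Y, Z`. -/
theorem stmt_6 {K A : Type*} [Field K] [CharZero K] [AddCommGroup A] [Module K A]
    (mul : A →ₗ[K] A →ₗ[K] A) :
    ((∀ X Y Z : A, mul X (mul Y Z) = mul (mul X Y) Z + mul Y (mul X Z)) ∧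
     (∀ X Y Z : A, mul (mul Y Z) X = mul (mul Y X) Z + mul Y (mul Z X))) ↔
    ((∀ X Y Z : A, mul X (mul Y Z) - mul (mul X Y) Z = mul Y (mul X Z)) ∧
     (∀ X Y Z : A, mul X (mul Y Z) + mul (mul Y Z) X = 0)) :=
  stmt_6_general mul
end

section
/- Every symmetric Leibniz algebra over a field K of characteristic 0 is weakly associative. -/
theorem stmt_7_general {K A : Type*} [Field K] [AddCommGroup A] [Module K A]
    (mul : A →ₗ[K] A →ₗ[K] A)
    (hL1 : ∀ X Y Z : A, mul X (mul Y Z) = mul (mul X Y) Z + mul Y (mul X Z))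
    (hL2 : ∀ X Y Z : A, mul (mul Y Z) X = mul (mul Y X) Z + mul Y (mul Z X)) :
    ∀ X Y Z : A,
      (mul X (mul Y Z) - mul (mul X Y) Z)
        + (mul Y (mul Z X) - mul (mul Y Z) X)
        - (mul Y (mul X Z) - mul (mul Y X) Z) = 0 := by
  intro X Y Z
  rw [hL1 X Y Z, hL2 X Y Z, hL1 Y X Z]
  abel

/-- Every symmetric Leibniz algebra over a field of characteristic zero
is weakly associative. -/
theorem stmt_7 {K A : Type*} [Field K] [CharZero K] [AddCommGroup A] [Module K A]
    (mul : A →ₗ[K] A →ₗ[K] A)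
    (hL1 : ∀ X Y Z : A, mul X (mul Y Z) = mul (mul X Y) Z + mul Y (mul X Z))
    (hL2 : ∀ X Y Z : A, mul (mul Y Z) X = mul (mul Y X) Z + mul Y (mul Z X)) :
    ∀ X Y Z : A,
      (mul X (mul Y Z) - mul (mul X Y) Z)
        + (mul Y (mul Z X) - mul (mul Y Z) X)
        - (mul Y (mul X Z) - mul (mul Y X) Z) = 0 :=
  stmt_7_general mul hL1 hL2
end

section
/- Let (A,∗) be a symmetric Leibniz algebra over a field K of characteristic 0 and let (A, •, [ , ]) be its polarization, X•Y = (X∗Y + Y∗X)/2 and [X,Y] = (X∗Y − Y∗X)/2. Then (A, •, [ , ]) is a Poisson algebra: • is commutative and associative, [ , ] is a Lie bracket, and the Leibniz identity [X•Y,Z] = X•[Y,Z] + [X,Z]•Y holds for all X,Y,Z ∈ A. -/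
/-!
In a symmetric Leibniz algebra the left identity makes every symmetric product `X∗Y + Y∗X` a
left annihilator and the right identity makes it a right annihilator; combining the two, every
product `Y∗Z` anticommutes with every `X`. Hence `•` vanishes on `A • (A∗A)`, so the
associativity and Leibniz identities hold because both of their sides are `0`, and
`[[X,Y],Z] = (X∗Y)∗Z`, whose cyclic sum vanishes by the left identity.
-/

structure IsSymmLeibniz {A : Type*} [Add A] (mul : A → A → A) : Prop where
  left : ∀ X Y Z : A, mul X (mul Y Z) = mul (mul X Y) Z + mul Y (mul X Z)
  right : ∀ X Y Z : A, mul (mul Y Z) X = mul (mul Y X) Z + mul Y (mul Z X)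

namespace IsSymmLeibniz

variable {A : Type*} [AddCommGroup A] {mul : A → A → A}

theorem mul_mul_add_mul_swap_mul (h : IsSymmLeibniz mul) (X Y Z : A) :
    mul (mul X Y) Z + mul (mul Y X) Z = 0 := by
  have h₁ := h.left X Y Z
  have h₂ := h.left Y X Z
  linear_combination (norm := abel) -h₁ - h₂

theorem mul_mul_add_mul_mul_swap (h : IsSymmLeibniz mul) (X Y Z : A) :
    mul Z (mul X Y) + mul Z (mul Y X) = 0 := by
  have h₁ := h.right X Z Y
  have h₂ := h.right Y Z X
  linear_combination (norm := abel) -h₁ - h₂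

theorem mul_mul_add_mul_mul_comm (h : IsSymmLeibniz mul) (X Y Z : A) :
    mul X (mul Y Z) + mul (mul Y Z) X = 0 := by
  have h₁ := h.left X Y Z
  have h₂ := h.right X Y Z
  have h₃ := h.mul_mul_add_mul_swap_mul X Y Z
  have h₄ := h.mul_mul_add_mul_mul_swap X Z Y
  linear_combination (norm := abel) h₁ + h₂ + h₃ + h₄

theorem mul_mul_add_mul_mul_add_mul_mul (h : IsSymmLeibniz mul) (X Y Z : A) :
    mul (mul X Y) Z + mul (mul Y Z) X + mul (mul Z X) Y = 0 := by
  have h₁ := h.left X Y Z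
  have h₂ := h.mul_mul_add_mul_mul_comm X Y Z
  have h₃ := h.mul_mul_add_mul_mul_comm Y Z X
  have h₄ := h.mul_mul_add_mul_mul_swap X Z Y
  linear_combination (norm := abel) -h₁ + h₂ + h₃ - h₄

theorem double_commutator_eq_four_nsmul (h : IsSymmLeibniz mul) (X Y Z : A) :
    mul (mul X Y) Z - mul (mul Y X) Z - mul Z (mul X Y) + mul Z (mul Y X) =
      4 • mul (mul X Y) Z := by
  have h₁ := h.mul_mul_add_mul_swap_mul X Y Z
  have h₂ := h.mul_mul_add_mul_mul_comm Z X Y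
  have h₃ := h.mul_mul_add_mul_mul_comm Z Y X
  linear_combination (norm := abel) (-2 : ℤ) • h₁ - h₂ + h₃

end IsSymmLeibniz

theorem stmt_8_general {K A : Type*} [Field K] [AddCommGroup A] [Module K A]
    (mul : A →ₗ[K] A →ₗ[K] A)
    (hL1 : ∀ X Y Z : A, mul X (mul Y Z) = mul (mul X Y) Z + mul Y (mul X Z))
    (hL2 : ∀ X Y Z : A, mul (mul Y Z) X = mul (mul Y X) Z + mul Y (mul Z X))
    (dot br : A → A → A)
    (hdot : ∀ X Y : A, dot X Y = (2 : K)⁻¹ • (mul X Y + mul Y X))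
    (hbr : ∀ X Y : A, br X Y = (2 : K)⁻¹ • (mul X Y - mul Y X)) :
    (∀ X Y : A, dot X Y = dot Y X) ∧
    (∀ X Y Z : A, dot X (dot Y Z) = dot (dot X Y) Z) ∧
    (∀ X Y : A, br X Y = - br Y X) ∧
    (∀ X Y Z : A, br (br X Y) Z + br (br Y Z) X + br (br Z X) Y = 0) ∧
    (∀ X Y Z : A, br (dot X Y) Z = dot X (br Y Z) + dot (br X Z) Y) := by
  have h : IsSymmLeibniz fun X Y => mul X Y := ⟨hL1, hL2⟩
  refine ⟨fun X Y => ?_, fun X Y Z => ?_, fun X Y => ?_, fun X Y Z => ?_, fun X Y Z => ?_⟩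
  · rw [hdot, hdot]
    module
  · simp only [hdot, map_add, map_smul, LinearMap.add_apply, LinearMap.smul_apply]
    linear_combination (norm := module) ((2 : K)⁻¹ * (2 : K)⁻¹) •
      (h.mul_mul_add_mul_mul_comm X Y Z + h.mul_mul_add_mul_mul_comm X Z Y
        - h.mul_mul_add_mul_mul_comm Z X Y - h.mul_mul_add_mul_mul_comm Z Y X)
  · rw [hbr, hbr]
    module
  · simp only [hbr, map_sub, map_smul, LinearMap.sub_apply, LinearMap.smul_apply]
    linear_combination (norm := module) ((2 : K)⁻¹ * (2 : K)⁻¹) •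
      (h.double_commutator_eq_four_nsmul X Y Z + h.double_commutator_eq_four_nsmul Y Z X
        + h.double_commutator_eq_four_nsmul Z X Y + 4 • h.mul_mul_add_mul_mul_add_mul_mul X Y Z)
  · simp only [hdot, hbr, map_add, map_sub, map_smul, LinearMap.add_apply,
      LinearMap.sub_apply, LinearMap.smul_apply]
    linear_combination (norm := module) ((2 : K)⁻¹ * (2 : K)⁻¹) •
      (h.mul_mul_add_mul_swap_mul X Y Z - h.mul_mul_add_mul_mul_swap X Y Z
        - h.mul_mul_add_mul_mul_comm X Y Z + h.mul_mul_add_mul_mul_comm X Z Y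
        - h.mul_mul_add_mul_mul_comm Y X Z + h.mul_mul_add_mul_mul_comm Y Z X)

/-- The polarization of a symmetric Leibniz algebra is a Poisson algebra:
`•` is commutative and associative, `[ , ]` is a Lie bracket, and the
Leibniz identity holds. -/
theorem stmt_8 {K A : Type*} [Field K] [CharZero K] [AddCommGroup A] [Module K A]
    (mul : A →ₗ[K] A →ₗ[K] A)
    (hL1 : ∀ X Y Z : A, mul X (mul Y Z) = mul (mul X Y) Z + mul Y (mul X Z))
    (hL2 : ∀ X Y Z : A, mul (mul Y Z) X = mul (mul Y X) Z + mul Y (mul Z X))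
    (dot br : A → A → A)
    (hdot : ∀ X Y : A, dot X Y = (2 : K)⁻¹ • (mul X Y + mul Y X))
    (hbr : ∀ X Y : A, br X Y = (2 : K)⁻¹ • (mul X Y - mul Y X)) :
    (∀ X Y : A, dot X Y = dot Y X) ∧
    (∀ X Y Z : A, dot X (dot Y Z) = dot (dot X Y) Z) ∧
    (∀ X Y : A, br X Y = - br Y X) ∧
    (∀ X Y Z : A, br (br X Y) Z + br (br Y Z) X + br (br Z X) Y = 0) ∧
    (∀ X Y Z : A, br (dot X Y) Z = dot X (br Y Z) + dot (br X Z) Y) :=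
  stmt_8_general mul hL1 hL2 dot br hdot hbr
end

section
/- Let (A,∗) be a symmetric Leibniz algebra over a field K of characteristic 0 and let X•Y = (X∗Y + Y∗X)/2 be its polarized commutative product. Then X•(Y•Z) = 0 for all X,Y,Z ∈ A; in particular the commutative associative algebra (A,•) is two-step nilpotent. -/
/-! Two instances of the right Leibniz identity, with `Y` and `Z` interchanged, share the terms
`(X ∗ Y) ∗ Z` and `(X ∗ Z) ∗ Y`; substituting one into the other leaves `X ∗ (Y ∗ Z + Z ∗ Y) = 0`.
The left identity gives `(Y ∗ Z + Z ∗ Y) ∗ X = 0` in the same way. So `Y • Z` annihilates `A`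
from both sides, and `X • (Y • Z) = 0`. -/

section

variable {R A : Type*} [CommSemiring R] [AddCommGroup A] [Module R A]
  (mul : A →ₗ[R] A →ₗ[R] A)

theorem mul_mul_add_mul_swap_eq_zero
    (hR : ∀ X Y Z : A, mul (mul Y Z) X = mul (mul Y X) Z + mul Y (mul Z X)) (X Y Z : A) :
    mul X (mul Y Z + mul Z Y) = 0 := by
  have h := hR Z X Y
  rw [hR Y X Z, add_assoc, left_eq_add] at h
  rw [map_add, add_comm, h]

theorem mul_add_mul_swap_mul_eq_zero
    (hL : ∀ X Y Z : A, mul X (mul Y Z) = mul (mul X Y) Z + mul Y (mul X Z)) (X Y Z : A) :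
    mul (mul Y Z + mul Z Y) X = 0 := by
  have h := hL Y Z X
  rw [hL Z Y X, ← add_assoc, right_eq_add] at h
  rw [map_add, LinearMap.add_apply, h]

end

theorem stmt_9_general {K A : Type*} [Field K] [AddCommGroup A] [Module K A]
    (mul : A →ₗ[K] A →ₗ[K] A)
    (hL1 : ∀ X Y Z : A, mul X (mul Y Z) = mul (mul X Y) Z + mul Y (mul X Z))
    (hL2 : ∀ X Y Z : A, mul (mul Y Z) X = mul (mul Y X) Z + mul Y (mul Z X))
    (dot : A → A → A)
    (hdot : ∀ X Y : A, dot X Y = (2 : K)⁻¹ • (mul X Y + mul Y X)) :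
    ∀ X Y Z : A, dot X (dot Y Z) = 0 := by
  intro X Y Z
  rw [hdot, hdot, map_smul, LinearMap.map_smul₂, mul_mul_add_mul_swap_eq_zero mul hL2,
    mul_add_mul_swap_mul_eq_zero mul hL1, smul_zero, add_zero, smul_zero]

/-- For a symmetric Leibniz algebra, the polarized commutative product `•` satisfies
`X • (Y • Z) = 0` for all `X, Y, Z`; in particular `(A, •)` is two-step nilpotent. -/
theorem stmt_9 {K A : Type*} [Field K] [CharZero K] [AddCommGroup A] [Module K A]
    (mul : A →ₗ[K] A →ₗ[K] A)
    (hL1 : ∀ X Y Z : A, mul X (mul Y Z) = mul (mul X Y) Z + mul Y (mul X Z))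
    (hL2 : ∀ X Y Z : A, mul (mul Y Z) X = mul (mul Y X) Z + mul Y (mul Z X))
    (dot : A → A → A)
    (hdot : ∀ X Y : A, dot X Y = (2 : K)⁻¹ • (mul X Y + mul Y X)) :
    ∀ X Y Z : A, dot X (dot Y Z) = 0 :=
  stmt_9_general mul hL1 hL2 dot hdot
end

section
/- Let (A,∗) be a symmetric Leibniz algebra over a field K of characteristic 0 with polarization X•Y = (X∗Y + Y∗X)/2 and [X,Y] = (X∗Y − Y∗X)/2. Then X•[Y,Z] = 0 for all X,Y,Z ∈ A; that is, the derived Lie subalgebra [A,A] is contained in the annihilator (center) of the commutative algebra (A,•). -/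
/-! The two Leibniz identities together force every product `Y ∗ Z` to anticommute with
everything: `X ∗ (Y ∗ Z) + (Y ∗ Z) ∗ X = 0`. With `c = Y ∗ Z - Z ∗ Y` this gives
`X • [Y, Z] = ¼ (X ∗ c + c ∗ X) = 0`. -/

section SymmetricLeibniz

variable {R A : Type*} [CommSemiring R] [AddCommGroup A] [Module R A] (mul : A →ₗ[R] A →ₗ[R] A)

-- Left Leibniz at `(Y, X, Z)` minus right Leibniz at `(Z, Y, X)`.
theorem mul_mul_add_mul_mul_eq_zero
    (hL1 : ∀ X Y Z : A, mul X (mul Y Z) = mul (mul X Y) Z + mul Y (mul X Z))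
    (hL2 : ∀ X Y Z : A, mul (mul Y Z) X = mul (mul Y X) Z + mul Y (mul Z X))
    (X Y Z : A) : mul X (mul Y Z) + mul (mul Y Z) X = 0 := by
  have h := hL1 Y X Z
  rw [hL2 Z Y X] at h
  calc mul X (mul Y Z) + mul (mul Y Z) X
      = (mul (mul Y Z) X + mul Y (mul X Z) + mul X (mul Y Z)) - mul Y (mul X Z) := by abel
    _ = 0 := by rw [← h, sub_self]

theorem mul_commutator_add_commutator_mul_eq_zero
    (hL1 : ∀ X Y Z : A, mul X (mul Y Z) = mul (mul X Y) Z + mul Y (mul X Z))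
    (hL2 : ∀ X Y Z : A, mul (mul Y Z) X = mul (mul Y X) Z + mul Y (mul Z X))
    (X Y Z : A) : mul X (mul Y Z - mul Z Y) + mul (mul Y Z - mul Z Y) X = 0 := by
  have hYZ := mul_mul_add_mul_mul_eq_zero mul hL1 hL2 X Y Z
  have hZY := mul_mul_add_mul_mul_eq_zero mul hL1 hL2 X Z Y
  rw [map_sub, map_sub, LinearMap.sub_apply]
  calc mul X (mul Y Z) - mul X (mul Z Y) + (mul (mul Y Z) X - mul (mul Z Y) X)
      = (mul X (mul Y Z) + mul (mul Y Z) X) - (mul X (mul Z Y) + mul (mul Z Y) X) := by abel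
    _ = 0 := by rw [hYZ, hZY, sub_self]

end SymmetricLeibniz

theorem stmt_10_general {K A : Type*} [Field K] [AddCommGroup A] [Module K A]
    (mul : A →ₗ[K] A →ₗ[K] A)
    (hL1 : ∀ X Y Z : A, mul X (mul Y Z) = mul (mul X Y) Z + mul Y (mul X Z))
    (hL2 : ∀ X Y Z : A, mul (mul Y Z) X = mul (mul Y X) Z + mul Y (mul Z X))
    (dot br : A → A → A)
    (hdot : ∀ X Y : A, dot X Y = (2 : K)⁻¹ • (mul X Y + mul Y X))
    (hbr : ∀ X Y : A, br X Y = (2 : K)⁻¹ • (mul X Y - mul Y X)) :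
    ∀ X Y Z : A, dot X (br Y Z) = 0 := by
  intro X Y Z
  rw [hdot, hbr, map_smul, map_smul, LinearMap.smul_apply, ← smul_add,
    mul_commutator_add_commutator_mul_eq_zero mul hL1 hL2, smul_zero, smul_zero]

/-- For a symmetric Leibniz algebra with polarization `(•, [ , ])`, one has
`X • [Y, Z] = 0` for all `X, Y, Z`. -/
theorem stmt_10 {K A : Type*} [Field K] [CharZero K] [AddCommGroup A] [Module K A]
    (mul : A →ₗ[K] A →ₗ[K] A)
    (hL1 : ∀ X Y Z : A, mul X (mul Y Z) = mul (mul X Y) Z + mul Y (mul X Z))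
    (hL2 : ∀ X Y Z : A, mul (mul Y Z) X = mul (mul Y X) Z + mul Y (mul Z X))
    (dot br : A → A → A)
    (hdot : ∀ X Y : A, dot X Y = (2 : K)⁻¹ • (mul X Y + mul Y X))
    (hbr : ∀ X Y : A, br X Y = (2 : K)⁻¹ • (mul X Y - mul Y X)) :
    ∀ X Y Z : A, dot X (br Y Z) = 0 :=
  stmt_10_general mul hL1 hL2 dot br hdot hbr
end

section
/- Let (A,∗) be a symmetric Leibniz algebra over a field K of characteristic 0 and let [X,Y] = (X∗Y − Y∗X)/2 be its polarized skew-symmetric product. Then [ , ] satisfies the Jacobi identity [[X,Y],Z] + [[Y,Z],X] + [[Z,X],Y] = 0 for all X,Y,Z ∈ A; that is, (A,∗) is Lie-admissible. -/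
/-!
In a symmetric Leibniz algebra both the left multiplications `X ∗ ·` and the right
multiplications `· ∗ X` are derivations, so their difference `ad X = [X, ·]` is one as well.
A derivation of a product is also a derivation of its commutator, so every `ad X` is a
derivation of the bracket: this is the Jacobi identity in Leibniz form, which for an
antisymmetric bracket is equivalent to the cyclic one.
-/

namespace LinearMap

variable {R M : Type*} [CommRing R] [AddCommGroup M] [Module R M]

def IsDerivation (mul : M →ₗ[R] M →ₗ[R] M) (D : M →ₗ[R] M) : Prop :=
  ∀ Y Z, D (mul Y Z) = mul (D Y) Z + mul Y (D Z)

namespace IsDerivation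

variable {mul : M →ₗ[R] M →ₗ[R] M} {D E : M →ₗ[R] M}

theorem sub (hD : IsDerivation mul D) (hE : IsDerivation mul E) :
    IsDerivation mul (D - E) := fun Y Z => by
  simp only [sub_apply, hD Y Z, hE Y Z, map_sub]
  abel

theorem commutator (hD : IsDerivation mul D) : IsDerivation (mul - mul.flip) D := fun Y Z => by
  simp only [sub_apply, flip_apply, map_sub, hD Y Z, hD Z Y]
  abel

theorem smul (hD : IsDerivation mul D) (a : R) : IsDerivation (a • mul) (a • D) := fun Y Z => by
  simp only [smul_apply, map_smul, hD Y Z, smul_add]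

end IsDerivation

theorem jacobi_of_isDerivation {B : M →ₗ[R] M →ₗ[R] M} (hanti : ∀ X Y, B Y X = -B X Y)
    (hder : ∀ X, IsDerivation B (B X)) (X Y Z : M) :
    B (B X Y) Z + B (B Y Z) X + B (B Z X) Y = 0 := by
  rw [hanti X (B Y Z), hder X Y Z, hanti Y (B Z X), hanti X Z, map_neg]
  abel

end LinearMap

open LinearMap

theorem stmt_12_general {K A : Type*} [Field K] [AddCommGroup A] [Module K A]
    (mul : A →ₗ[K] A →ₗ[K] A)
    (hL1 : ∀ X Y Z : A, mul X (mul Y Z) = mul (mul X Y) Z + mul Y (mul X Z))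
    (hL2 : ∀ X Y Z : A, mul (mul Y Z) X = mul (mul Y X) Z + mul Y (mul Z X))
    (br : A → A → A)
    (hbr : ∀ X Y : A, br X Y = (2 : K)⁻¹ • (mul X Y - mul Y X)) :
    ∀ X Y Z : A, br (br X Y) Z + br (br Y Z) X + br (br Z X) Y = 0 := by
  set B : A →ₗ[K] A →ₗ[K] A := (2 : K)⁻¹ • (mul - mul.flip)
  have hB : ∀ X Y, br X Y = B X Y := fun X Y => by simp [B, hbr]
  have hanti : ∀ X Y, B Y X = -B X Y := fun X Y => by simp [B, ← smul_neg]
  have hder : ∀ X, IsDerivation B (B X) := fun X =>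
    (((show IsDerivation mul (mul X) from hL1 X).sub
      (show IsDerivation mul (mul.flip X) from hL2 X)).commutator).smul _
  intro X Y Z
  simpa only [hB] using jacobi_of_isDerivation hanti hder X Y Z

/-- The polarized skew-symmetric product of a symmetric Leibniz algebra satisfies
the Jacobi identity; that is, symmetric Leibniz algebras are Lie-admissible. -/
theorem stmt_12 {K A : Type*} [Field K] [CharZero K] [AddCommGroup A] [Module K A]
    (mul : A →ₗ[K] A →ₗ[K] A)
    (hL1 : ∀ X Y Z : A, mul X (mul Y Z) = mul (mul X Y) Z + mul Y (mul X Z))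
    (hL2 : ∀ X Y Z : A, mul (mul Y Z) X = mul (mul Y X) Z + mul Y (mul Z X))
    (br : A → A → A)
    (hbr : ∀ X Y : A, br X Y = (2 : K)⁻¹ • (mul X Y - mul Y X)) :
    ∀ X Y Z : A, br (br X Y) Z + br (br Y Z) X + br (br Z X) Y = 0 :=
  stmt_12_general mul hL1 hL2 br hbr
end

section
/- Let A be a K-vector space over a field K of characteristic 0 with a commutative associative bilinear multiplication ∗. Then (A,∗) is a symmetric Leibniz algebra if and only if (A,∗) is two-step nilpotent, i.e. X∗(Y∗Z) = 0 for all X,Y,Z ∈ A. -/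
/-! In a commutative associative algebra both `(X∗Y)∗Z` and `Y∗(X∗Z)` equal `X∗(Y∗Z)`, so the
left Leibniz identity says `w = w + w` for `w = X∗(Y∗Z)`, forcing `w = 0`. Conversely, in a
two-step nilpotent commutative algebra every term of both Leibniz identities is a triple
product, hence zero. -/

section

variable {R A : Type*} [CommSemiring R] [AddCommMonoid A] [Module R A]
  {mul : A →ₗ[R] A →ₗ[R] A}

theorem mul_mul_left_comm_of_comm_assoc (hcomm : ∀ X Y : A, mul X Y = mul Y X)
    (hassoc : ∀ X Y Z : A, mul X (mul Y Z) = mul (mul X Y) Z) (X Y Z : A) :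
    mul X (mul Y Z) = mul Y (mul X Z) := by
  rw [hassoc, hassoc Y, hcomm X Y]

theorem mul_mul_eq_zero_of_leibniz [IsLeftCancelAdd A] (hcomm : ∀ X Y : A, mul X Y = mul Y X)
    (hassoc : ∀ X Y Z : A, mul X (mul Y Z) = mul (mul X Y) Z) {X Y Z : A}
    (hleib : mul X (mul Y Z) = mul (mul X Y) Z + mul Y (mul X Z)) :
    mul X (mul Y Z) = 0 := by
  rw [← hassoc X Y Z, mul_mul_left_comm_of_comm_assoc hcomm hassoc Y X Z] at hleib
  exact left_eq_add.mp hleib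

theorem mul_mul_eq_zero_left (hcomm : ∀ X Y : A, mul X Y = mul Y X)
    (hnil : ∀ X Y Z : A, mul X (mul Y Z) = 0) (X Y Z : A) : mul (mul X Y) Z = 0 := by
  rw [hcomm, hnil]

theorem leibniz_left_of_nilpotent (hcomm : ∀ X Y : A, mul X Y = mul Y X)
    (hnil : ∀ X Y Z : A, mul X (mul Y Z) = 0) (X Y Z : A) :
    mul X (mul Y Z) = mul (mul X Y) Z + mul Y (mul X Z) := by
  rw [hnil, hnil, mul_mul_eq_zero_left hcomm hnil, add_zero]

theorem leibniz_right_of_nilpotent (hcomm : ∀ X Y : A, mul X Y = mul Y X)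
    (hnil : ∀ X Y Z : A, mul X (mul Y Z) = 0) (X Y Z : A) :
    mul (mul Y Z) X = mul (mul Y X) Z + mul Y (mul Z X) := by
  rw [mul_mul_eq_zero_left hcomm hnil, mul_mul_eq_zero_left hcomm hnil, hnil, add_zero]

end

theorem stmt_15_general {K A : Type*} [Field K] [AddCommGroup A] [Module K A]
    (mul : A →ₗ[K] A →ₗ[K] A)
    (hcomm : ∀ X Y : A, mul X Y = mul Y X)
    (hassoc : ∀ X Y Z : A, mul X (mul Y Z) = mul (mul X Y) Z) :
    ((∀ X Y Z : A, mul X (mul Y Z) = mul (mul X Y) Z + mul Y (mul X Z)) ∧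
     (∀ X Y Z : A, mul (mul Y Z) X = mul (mul Y X) Z + mul Y (mul Z X))) ↔
    (∀ X Y Z : A, mul X (mul Y Z) = 0) :=
  ⟨fun ⟨hleft, _⟩ _ _ _ => mul_mul_eq_zero_of_leibniz hcomm hassoc (hleft _ _ _),
    fun hnil => ⟨leibniz_left_of_nilpotent hcomm hnil, leibniz_right_of_nilpotent hcomm hnil⟩⟩

/-- A commutative associative algebra `(A, ∗)` is a symmetric Leibniz algebra
iff it is two-step nilpotent, i.e. `X∗(Y∗Z) = 0` for all `X, Y, Z`. -/
theorem stmt_15 {K A : Type*} [Field K] [CharZero K] [AddCommGroup A] [Module K A]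
    (mul : A →ₗ[K] A →ₗ[K] A)
    (hcomm : ∀ X Y : A, mul X Y = mul Y X)
    (hassoc : ∀ X Y Z : A, mul X (mul Y Z) = mul (mul X Y) Z) :
    ((∀ X Y Z : A, mul X (mul Y Z) = mul (mul X Y) Z + mul Y (mul X Z)) ∧
     (∀ X Y Z : A, mul (mul Y Z) X = mul (mul Y X) Z + mul Y (mul Z X))) ↔
    (∀ X Y Z : A, mul X (mul Y Z) = 0) :=
  stmt_15_general mul hcomm hassoc
end

section
/- Let g₁ be a Lie algebra over a field K of characteristic 0, let w ∈ g₁ be an element of the center of g₁, and let D be a derivation of g₁ with D(w) = 0. Define on A = K × g₁ the bilinear multiplication (a,x) ∗ (b,y) = (0, ab·w + a·D(y) − b·D(x) + [x,y]). Then (A,∗) is a symmetric Leibniz algebra. -/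
/-!
Both identities are direct expansions of the second coordinate (the first one is always `0`):
the `w`-terms drop out because `w` is central and `D w = 0`, the terms `D (D _)` cancel in
pairs, and what remains cancels by the Leibniz rule for `D` and the Jacobi identity.
-/

namespace CentralDerivationProduct

variable {R L : Type*} [CommRing R] [LieRing L] [LieAlgebra R L]

def mul (w : L) (D : L →ₗ[R] L) (p q : R × L) : R × L :=
  (0, (p.1 * q.1) • w + p.1 • D q.2 - q.1 • D p.2 + ⁅p.2, q.2⁆)

variable {w : L} {D : L →ₗ[R] L}

theorem mul_left_leibniz (hw : ∀ x : L, ⁅w, x⁆ = 0)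
    (hD : ∀ x y : L, D ⁅x, y⁆ = ⁅D x, y⁆ + ⁅x, D y⁆) (hDw : D w = 0) (X Y Z : R × L) :
    mul w D X (mul w D Y Z) = mul w D (mul w D X Y) Z + mul w D Y (mul w D X Z) := by
  have hw' (x : L) : ⁅x, w⁆ = 0 := by rw [← lie_skew, hw, neg_zero]
  have hskew (x y : L) : ⁅D x, y⁆ = -⁅y, D x⁆ := (lie_skew _ _).symm
  ext
  · simp [mul]
  · simp only [mul, Prod.snd_add, zero_mul, mul_zero, zero_smul, zero_add, map_add, map_sub,
      map_smul, hD, hDw, smul_zero, lie_add, add_lie, lie_sub, sub_lie, lie_smul, smul_lie, hw, hw',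
      lie_lie, hskew, smul_neg]
    module

theorem mul_right_leibniz (hw : ∀ x : L, ⁅w, x⁆ = 0)
    (hD : ∀ x y : L, D ⁅x, y⁆ = ⁅D x, y⁆ + ⁅x, D y⁆) (hDw : D w = 0) (X Y Z : R × L) :
    mul w D (mul w D Y Z) X = mul w D (mul w D Y X) Z + mul w D Y (mul w D Z X) := by
  have hw' (x : L) : ⁅x, w⁆ = 0 := by rw [← lie_skew, hw, neg_zero]
  have hskew (x y : L) : ⁅D x, y⁆ = -⁅y, D x⁆ := (lie_skew _ _).symm
  ext
  · simp [mul]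
  · simp only [mul, Prod.snd_add, zero_mul, mul_zero, zero_smul, zero_add, map_add, map_sub,
      map_smul, hD, hDw, smul_zero, lie_add, add_lie, lie_sub, sub_lie, lie_smul, smul_lie, hw, hw',
      lie_lie, hskew, smul_neg]
    linear_combination (norm := module) lie_skew ⁅Y.2, X.2⁆ Z.2 + lie_lie Y.2 X.2 Z.2

end CentralDerivationProduct

open CentralDerivationProduct in
theorem stmt_16_general {K g₁ : Type*} [Field K]
    [LieRing g₁] [LieAlgebra K g₁]
    (w : g₁) (hw : ∀ x : g₁, ⁅w, x⁆ = 0)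
    (D : g₁ →ₗ[K] g₁)
    (hD : ∀ x y : g₁, D ⁅x, y⁆ = ⁅D x, y⁆ + ⁅x, D y⁆)
    (hDw : D w = 0)
    (star : K × g₁ → K × g₁ → K × g₁)
    (hstar : ∀ p q : K × g₁,
      star p q = (0, (p.1 * q.1) • w + p.1 • D q.2 - q.1 • D p.2 + ⁅p.2, q.2⁆)) :
    (∀ X Y Z : K × g₁, star X (star Y Z) = star (star X Y) Z + star Y (star X Z)) ∧
    (∀ X Y Z : K × g₁, star (star Y Z) X = star (star Y X) Z + star Y (star Z X)) := by
  obtain rfl : star = mul w D := funext₂ hstar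
  exact ⟨mul_left_leibniz hw hD hDw, mul_right_leibniz hw hD hDw⟩

/-- Let `g₁` be a Lie algebra over a field `K` of characteristic zero, `w` a central
element, and `D` a derivation of `g₁` with `D w = 0`. Then the multiplication
`(a,x) ∗ (b,y) = (0, ab•w + a•D y − b•D x + ⁅x,y⁆)` on `K × g₁` makes it a
symmetric Leibniz algebra. -/
theorem stmt_16 {K g₁ : Type*} [Field K] [CharZero K]
    [LieRing g₁] [LieAlgebra K g₁]
    (w : g₁) (hw : ∀ x : g₁, ⁅w, x⁆ = 0)
    (D : g₁ →ₗ[K] g₁)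
    (hD : ∀ x y : g₁, D ⁅x, y⁆ = ⁅D x, y⁆ + ⁅x, D y⁆)
    (hDw : D w = 0)
    (star : K × g₁ → K × g₁ → K × g₁)
    (hstar : ∀ p q : K × g₁,
      star p q = (0, (p.1 * q.1) • w + p.1 • D q.2 - q.1 • D p.2 + ⁅p.2, q.2⁆)) :
    (∀ X Y Z : K × g₁, star X (star Y Z) = star (star X Y) Z + star Y (star X Z)) ∧
    (∀ X Y Z : K × g₁, star (star Y Z) X = star (star Y X) Z + star Y (star Z X)) :=
  stmt_16_general w hw D hD hDw star hstar
end

section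
/- Let (A,∗) be a commutative symmetric Leibniz algebra over a field K of characteristic 0 and let φ₁ : A × A → A be a bilinear map satisfying δφ₁⁽¹⁾ = 0 and δφ₁⁽²⁾ = 0, where δφ⁽¹⁾(X,Y,Z) = φ(X, Y∗Z) − φ(X∗Y, Z) − φ(Y, X∗Z) + X∗φ(Y,Z) − φ(X,Y)∗Z − Y∗φ(X,Z) and δφ⁽²⁾(X,Y,Z) = φ(Y, Z∗X) − φ(Y∗Z, X) + φ(Y∗X, Z) + Y∗φ(Z,X) − φ(Y,Z)∗X + φ(Y,X)∗Z. Then the skew-symmetric map ψ(X,Y) = (φ₁(X,Y) − φ₁(Y,X))/2 satisfies the Leibniz identity with respect to ∗: ψ(X, Y∗Z) = ψ(X,Y)∗Z + Y∗ψ(X,Z) for all X,Y,Z ∈ A. -/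
/-!
Adding the two order-one conditions, commutativity of `∗` cancels three pairs of terms
(`φ(X∗Y, Z)`, `φ(Y, X∗Z)` and `X∗φ(Y,Z)` against their mirror images in `δφ⁽²⁾`), and what
remains is exactly twice the Leibniz defect of the skew part `ψ` of `φ`.
-/

namespace SymmetricLeibniz

variable {R A : Type*} [CommRing R] [AddCommGroup A] [Module R A]

def coboundary₁ (m φ : A →ₗ[R] A →ₗ[R] A) (X Y Z : A) : A :=
  φ X (m Y Z) - φ (m X Y) Z - φ Y (m X Z) + m X (φ Y Z) - m (φ X Y) Z - m Y (φ X Z)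

def coboundary₂ (m φ : A →ₗ[R] A →ₗ[R] A) (X Y Z : A) : A :=
  φ Y (m Z X) - φ (m Y Z) X + φ (m Y X) Z + m Y (φ Z X) - m (φ Y Z) X + m (φ Y X) Z

theorem coboundary₁_add_coboundary₂ (m φ : A →ₗ[R] A →ₗ[R] A)
    (hcomm : ∀ X Y : A, m X Y = m Y X) (X Y Z : A) :
    coboundary₁ m φ X Y Z + coboundary₂ m φ X Y Z =
      (φ X (m Y Z) - φ (m Y Z) X) - m (φ X Y - φ Y X) Z - m Y (φ X Z - φ Z X) := by
  have hXY : φ (m X Y) Z = φ (m Y X) Z := by rw [hcomm]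
  have hXZ : φ Y (m X Z) = φ Y (m Z X) := by rw [hcomm]
  have hXφ : m X (φ Y Z) = m (φ Y Z) X := hcomm _ _
  simp only [coboundary₁, coboundary₂, map_sub, LinearMap.sub_apply, hXY, hXZ, hXφ]
  abel

end SymmetricLeibniz

open SymmetricLeibniz in
theorem stmt_17_general {K A : Type*} [Field K] [AddCommGroup A] [Module K A]
    (m : A →ₗ[K] A →ₗ[K] A)
    (hcomm : ∀ X Y : A, m X Y = m Y X)
    (f : A →ₗ[K] A →ₗ[K] A)
    (hδ1 : ∀ X Y Z : A,
      f X (m Y Z) - f (m X Y) Z - f Y (m X Z)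
        + m X (f Y Z) - m (f X Y) Z - m Y (f X Z) = 0)
    (hδ2 : ∀ X Y Z : A,
      f Y (m Z X) - f (m Y Z) X + f (m Y X) Z
        + m Y (f Z X) - m (f Y Z) X + m (f Y X) Z = 0)
    (ψ : A → A → A)
    (hψ : ∀ X Y : A, ψ X Y = (2 : K)⁻¹ • (f X Y - f Y X)) :
    ∀ X Y Z : A, ψ X (m Y Z) = m (ψ X Y) Z + m Y (ψ X Z) := by
  intro X Y Z
  have hskew :
      (f X (m Y Z) - f (m Y Z) X) - m (f X Y - f Y X) Z - m Y (f X Z - f Z X) = 0 := by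
    rw [← coboundary₁_add_coboundary₂ m f hcomm, coboundary₁, coboundary₂, hδ1, hδ2, add_zero]
  rw [← sub_eq_zero]
  calc ψ X (m Y Z) - (m (ψ X Y) Z + m Y (ψ X Z))
      = (2 : K)⁻¹ • ((f X (m Y Z) - f (m Y Z) X) - m (f X Y - f Y X) Z
          - m Y (f X Z - f Z X)) := by
        simp only [hψ, map_smul, LinearMap.smul_apply]
        module
    _ = 0 := by rw [hskew, smul_zero]

/-- Let `(A, ∗)` be a commutative symmetric Leibniz algebra and `φ₁` a bilinear map
with `δφ₁⁽¹⁾ = 0` and `δφ₁⁽²⁾ = 0`. Then the skew-symmetric map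
`ψ(X,Y) = (φ₁(X,Y) − φ₁(Y,X))/2` satisfies the Leibniz identity with respect to `∗`. -/
theorem stmt_17 {K A : Type*} [Field K] [CharZero K] [AddCommGroup A] [Module K A]
    (m : A →ₗ[K] A →ₗ[K] A)
    (hcomm : ∀ X Y : A, m X Y = m Y X)
    (hL1 : ∀ X Y Z : A, m X (m Y Z) = m (m X Y) Z + m Y (m X Z))
    (hL2 : ∀ X Y Z : A, m (m Y Z) X = m (m Y X) Z + m Y (m Z X))
    (f : A →ₗ[K] A →ₗ[K] A)
    (hδ1 : ∀ X Y Z : A,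
      f X (m Y Z) - f (m X Y) Z - f Y (m X Z)
        + m X (f Y Z) - m (f X Y) Z - m Y (f X Z) = 0)
    (hδ2 : ∀ X Y Z : A,
      f Y (m Z X) - f (m Y Z) X + f (m Y X) Z
        + m Y (f Z X) - m (f Y Z) X + m (f Y X) Z = 0)
    (ψ : A → A → A)
    (hψ : ∀ X Y : A, ψ X Y = (2 : K)⁻¹ • (f X Y - f Y X)) :
    ∀ X Y Z : A, ψ X (m Y Z) = m (ψ X Y) Z + m Y (ψ X Z) :=
  stmt_17_general m hcomm f hδ1 hδ2 ψ hψ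
end

section
/- Let (A,∗) be a commutative symmetric Leibniz algebra over a field K of characteristic 0, let φ₁ : A × A → A be a bilinear map with δφ₁⁽¹⁾ = 0 and δφ₁⁽²⁾ = 0, and suppose there exists a bilinear map φ₂ : A × A → A such that for all X,Y,Z ∈ A: A_{φ₁}(X,Y,Z) − φ₁(Y, φ₁(X,Z)) + δφ₂⁽¹⁾(X,Y,Z) = 0 and A_{φ₁}(Y,Z,X) + φ₁(φ₁(Y,X), Z) + δφ₂⁽²⁾(X,Y,Z) = 0, where A_{φ₁}(X,Y,Z) = φ₁(X, φ₁(Y,Z)) − φ₁(φ₁(X,Y), Z). Then the skew-symmetric map ψ(X,Y) = (φ₁(X,Y) − φ₁(Y,X))/2 satisfies the Jacobi identity ψ(ψ(X,Y),Z) + ψ(ψ(Y,Z),X) + ψ(ψ(Z,X),Y) = 0 for all X,Y,Z ∈ A; that is, φ₁ is Lie-admissible. -/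
/-!
Adding the two order-two conditions, the sum `D(X,Y,Z)` of the defects of the two symmetric
Leibniz identities for `φ₁` equals `-(δφ₂⁽¹⁾ + δφ₂⁽²⁾)(X,Y,Z)`, and for a commutative `∗` this
coboundary is symmetric in `Y, Z`. Hence so is `D`, while `D(X,Z,Y) − D(X,Y,Z)` is exactly the
Jacobiator of the commutator `[X, Y] = φ₁(X,Y) − φ₁(Y,X) = 2ψ(X,Y)`.
-/

namespace SymmetricLeibniz

variable {R A : Type*} [CommRing R] [AddCommGroup A] [Module R A]

def leibniz₁ (f : A →ₗ[R] A →ₗ[R] A) (X Y Z : A) : A :=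
  f X (f Y Z) - f (f X Y) Z - f Y (f X Z)

/-- Minus the defect of `(Y∗Z)∗X = (Y∗X)∗Z + Y∗(Z∗X)`, the sign with which it enters the
order-two condition. -/
def leibniz₂ (f : A →ₗ[R] A →ₗ[R] A) (X Y Z : A) : A :=
  f Y (f Z X) - f (f Y Z) X + f (f Y X) Z

def jacobiator (B : A →ₗ[R] A →ₗ[R] A) (X Y Z : A) : A :=
  B (B X Y) Z + B (B Y Z) X + B (B Z X) Y

theorem jacobiator_smul (c : R) (B : A →ₗ[R] A →ₗ[R] A) (X Y Z : A) :
    jacobiator (c • B) X Y Z = (c * c) • jacobiator B X Y Z := by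
  simp only [jacobiator, LinearMap.smul_apply, map_smul, smul_add, mul_smul]

theorem coboundary_add_comm_apply {m : A →ₗ[R] A →ₗ[R] A} (hcomm : ∀ X Y : A, m X Y = m Y X)
    (φ : A →ₗ[R] A →ₗ[R] A) (X Y Z : A) :
    coboundary₁ m φ X Y Z + coboundary₂ m φ X Y Z
      = coboundary₁ m φ X Z Y + coboundary₂ m φ X Z Y := by
  simp only [coboundary₁, coboundary₂, hcomm (φ _ _) _]
  rw [hcomm Z X, hcomm Y X, hcomm Z Y]
  abel

theorem jacobiator_sub_flip (f : A →ₗ[R] A →ₗ[R] A) (X Y Z : A) :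
    jacobiator (f - f.flip) X Y Z
      = (leibniz₁ f X Z Y + leibniz₂ f X Z Y) - (leibniz₁ f X Y Z + leibniz₂ f X Y Z) := by
  simp only [jacobiator, leibniz₁, leibniz₂, LinearMap.sub_apply, LinearMap.flip_apply, map_sub]
  abel

theorem jacobiator_sub_flip_eq_zero {m f g : A →ₗ[R] A →ₗ[R] A}
    (hcomm : ∀ X Y : A, m X Y = m Y X)
    (h₁ : ∀ X Y Z : A, leibniz₁ f X Y Z + coboundary₁ m g X Y Z = 0)
    (h₂ : ∀ X Y Z : A, leibniz₂ f X Y Z + coboundary₂ m g X Y Z = 0) (X Y Z : A) :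
    jacobiator (f - f.flip) X Y Z = 0 := by
  have hsum : ∀ Y Z : A, leibniz₁ f X Y Z + leibniz₂ f X Y Z
      = -(coboundary₁ m g X Y Z + coboundary₂ m g X Y Z) := fun Y Z => by
    linear_combination (norm := abel) h₁ X Y Z + h₂ X Y Z
  rw [jacobiator_sub_flip, hsum, hsum, coboundary_add_comm_apply hcomm, sub_self]

end SymmetricLeibniz

theorem stmt_18_general {K A : Type*} [Field K] [AddCommGroup A] [Module K A]
    (m : A →ₗ[K] A →ₗ[K] A)
    (hcomm : ∀ X Y : A, m X Y = m Y X)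
    (f : A →ₗ[K] A →ₗ[K] A)
    (g : A →ₗ[K] A →ₗ[K] A)
    (hord2a : ∀ X Y Z : A,
      (f X (f Y Z) - f (f X Y) Z) - f Y (f X Z)
        + (g X (m Y Z) - g (m X Y) Z - g Y (m X Z)
            + m X (g Y Z) - m (g X Y) Z - m Y (g X Z)) = 0)
    (hord2b : ∀ X Y Z : A,
      (f Y (f Z X) - f (f Y Z) X) + f (f Y X) Z
        + (g Y (m Z X) - g (m Y Z) X + g (m Y X) Z
            + m Y (g Z X) - m (g Y Z) X + m (g Y X) Z) = 0)
    (ψ : A → A → A)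
    (hψ : ∀ X Y : A, ψ X Y = (2 : K)⁻¹ • (f X Y - f Y X)) :
    ∀ X Y Z : A, ψ (ψ X Y) Z + ψ (ψ Y Z) X + ψ (ψ Z X) Y = 0 := by
  intro X Y Z
  have hψ' : ψ = fun a b => ((2 : K)⁻¹ • (f - f.flip)) a b := by
    funext a b
    simp only [hψ, LinearMap.smul_apply, LinearMap.sub_apply, LinearMap.flip_apply]
  subst hψ'
  change SymmetricLeibniz.jacobiator _ X Y Z = 0
  rw [SymmetricLeibniz.jacobiator_smul,
    SymmetricLeibniz.jacobiator_sub_flip_eq_zero hcomm hord2a hord2b, smul_zero]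

/-- Order-two condition of a symmetric Leibniz formal deformation of a commutative
symmetric Leibniz algebra: the skew-symmetric part `ψ` of `φ₁` satisfies the Jacobi
identity, i.e. `φ₁` is Lie-admissible. -/
theorem stmt_18 {K A : Type*} [Field K] [CharZero K] [AddCommGroup A] [Module K A]
    (m : A →ₗ[K] A →ₗ[K] A)
    (hcomm : ∀ X Y : A, m X Y = m Y X)
    (hL1 : ∀ X Y Z : A, m X (m Y Z) = m (m X Y) Z + m Y (m X Z))
    (hL2 : ∀ X Y Z : A, m (m Y Z) X = m (m Y X) Z + m Y (m Z X))
    (f : A →ₗ[K] A →ₗ[K] A)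
    (hδ1 : ∀ X Y Z : A,
      f X (m Y Z) - f (m X Y) Z - f Y (m X Z)
        + m X (f Y Z) - m (f X Y) Z - m Y (f X Z) = 0)
    (hδ2 : ∀ X Y Z : A,
      f Y (m Z X) - f (m Y Z) X + f (m Y X) Z
        + m Y (f Z X) - m (f Y Z) X + m (f Y X) Z = 0)
    (g : A →ₗ[K] A →ₗ[K] A)
    (hord2a : ∀ X Y Z : A,
      (f X (f Y Z) - f (f X Y) Z) - f Y (f X Z)
        + (g X (m Y Z) - g (m X Y) Z - g Y (m X Z)
            + m X (g Y Z) - m (g X Y) Z - m Y (g X Z)) = 0)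
    (hord2b : ∀ X Y Z : A,
      (f Y (f Z X) - f (f Y Z) X) + f (f Y X) Z
        + (g Y (m Z X) - g (m Y Z) X + g (m Y X) Z
            + m Y (g Z X) - m (g Y Z) X + m (g Y X) Z) = 0)
    (ψ : A → A → A)
    (hψ : ∀ X Y : A, ψ X Y = (2 : K)⁻¹ • (f X Y - f Y X)) :
    ∀ X Y Z : A, ψ (ψ X Y) Z + ψ (ψ Y Z) X + ψ (ψ Z X) Y = 0 :=
  stmt_18_general m hcomm f g hord2a hord2b ψ hψ
end

section
/- Let (A,∗) be a commutative symmetric Leibniz algebra over a field K of characteristic 0, let φ₁ : A × A → A be a bilinear map with δφ₁⁽¹⁾ = 0 and δφ₁⁽²⁾ = 0, and suppose there exists a bilinear map φ₂ : A × A → A such that for all X,Y,Z ∈ A: A_{φ₁}(X,Y,Z) − φ₁(Y, φ₁(X,Z)) + δφ₂⁽¹⁾(X,Y,Z) = 0 and A_{φ₁}(Y,Z,X) + φ₁(φ₁(Y,X), Z) + δφ₂⁽²⁾(X,Y,Z) = 0, where A_{φ₁}(X,Y,Z) = φ₁(X, φ₁(Y,Z)) − φ₁(φ₁(X,Y), Z).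 Then the skew-symmetric map ψ(X,Y) = (φ₁(X,Y) − φ₁(Y,X))/2 satisfies ψ(X,Y)∗Z − ψ(Z,X)∗Y = 0 for all X,Y,Z ∈ A. -/
/-!
Subtracting the order-one condition `δφ⁽¹⁾(Y,Z,X) = 0` from `δφ⁽²⁾(X,Y,Z) = 0` leaves, once `∗` is
commutative, `S(Y∗X, Z) + 2 φ(Y,X)∗Z = 0` with `S(U,Z) = φ(U,Z) + φ(Z,U)`. The first term is
symmetric in `X` and `Y`, hence so is `φ(X,Y)∗Z`, and the skew part `ψ` of `φ` is annihilated by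
multiplication: `ψ(X,Y)∗Z = 0` for all `X, Y, Z`.
-/

section LeibnizCoboundary

variable {R A : Type*} [CommRing R] [AddCommGroup A] [Module R A]

def leibnizCoboundary₁ (m f : A →ₗ[R] A →ₗ[R] A) (X Y Z : A) : A :=
  f X (m Y Z) - f (m X Y) Z - f Y (m X Z) + m X (f Y Z) - m (f X Y) Z - m Y (f X Z)

def leibnizCoboundary₂ (m f : A →ₗ[R] A →ₗ[R] A) (X Y Z : A) : A :=
  f Y (m Z X) - f (m Y Z) X + f (m Y X) Z + m Y (f Z X) - m (f Y Z) X + m (f Y X) Z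

theorem leibnizCoboundary₂_sub_leibnizCoboundary₁ (m f : A →ₗ[R] A →ₗ[R] A) (X Y Z : A) :
    leibnizCoboundary₂ m f X Y Z - leibnizCoboundary₁ m f Y Z X =
      f (m Y X) Z + f Z (m Y X) + m (f Y X) Z + m Z (f Y X) := by
  unfold leibnizCoboundary₁ leibnizCoboundary₂
  abel

variable {m f : A →ₗ[R] A →ₗ[R] A} (hcomm : ∀ X Y : A, m X Y = m Y X)
  (h₁ : ∀ X Y Z : A, leibnizCoboundary₁ m f X Y Z = 0)
  (h₂ : ∀ X Y Z : A, leibnizCoboundary₂ m f X Y Z = 0)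
include hcomm h₁ h₂

theorem two_smul_mul_cochain_apply_comm (X Y Z : A) :
    (2 : R) • m (f X Y) Z = (2 : R) • m (f Y X) Z := by
  have key : ∀ X Y : A, f (m X Y) Z + f Z (m X Y) + (2 : R) • m (f X Y) Z = 0 := fun X Y => by
    have h := leibnizCoboundary₂_sub_leibnizCoboundary₁ m f Y X Z
    rwa [h₂, h₁, sub_zero, hcomm Z, add_assoc _ (m _ Z), ← two_smul R, eq_comm] at h
  have hXY := key X Y
  rw [hcomm X Y] at hXY
  exact add_left_cancel (hXY.trans (key Y X).symm)

theorem mul_cochain_apply_comm [IsDomain R] [Module.IsTorsionFree R A] [NeZero (2 : R)]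
    (X Y Z : A) : m (f X Y) Z = m (f Y X) Z :=
  smul_right_injective A two_ne_zero (two_smul_mul_cochain_apply_comm hcomm h₁ h₂ X Y Z)

end LeibnizCoboundary

theorem stmt_19_general {K A : Type*} [Field K] [CharZero K] [AddCommGroup A] [Module K A]
    (m : A →ₗ[K] A →ₗ[K] A)
    (hcomm : ∀ X Y : A, m X Y = m Y X)
    (f : A →ₗ[K] A →ₗ[K] A)
    (hδ1 : ∀ X Y Z : A,
      f X (m Y Z) - f (m X Y) Z - f Y (m X Z)
        + m X (f Y Z) - m (f X Y) Z - m Y (f X Z) = 0)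
    (hδ2 : ∀ X Y Z : A,
      f Y (m Z X) - f (m Y Z) X + f (m Y X) Z
        + m Y (f Z X) - m (f Y Z) X + m (f Y X) Z = 0)
    (ψ : A → A → A)
    (hψ : ∀ X Y : A, ψ X Y = (2 : K)⁻¹ • (f X Y - f Y X)) :
    ∀ X Y Z : A, m (ψ X Y) Z - m (ψ Z X) Y = 0 := by
  have mul_skew : ∀ X Y Z : A, m (ψ X Y) Z = 0 := fun X Y Z => by
    rw [hψ, map_smul, map_sub, LinearMap.smul_apply, LinearMap.sub_apply,
      mul_cochain_apply_comm hcomm hδ1 hδ2, sub_self, smul_zero]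
  intro X Y Z
  rw [mul_skew, mul_skew, sub_self]

/-- Order-two condition of a symmetric Leibniz formal deformation of a commutative
symmetric Leibniz algebra: the skew-symmetric part `ψ` of `φ₁` satisfies
`ψ(X,Y)∗Z − ψ(Z,X)∗Y = 0`. -/
theorem stmt_19 {K A : Type*} [Field K] [CharZero K] [AddCommGroup A] [Module K A]
    (m : A →ₗ[K] A →ₗ[K] A)
    (hcomm : ∀ X Y : A, m X Y = m Y X)
    (hL1 : ∀ X Y Z : A, m X (m Y Z) = m (m X Y) Z + m Y (m X Z))
    (hL2 : ∀ X Y Z : A, m (m Y Z) X = m (m Y X) Z + m Y (m Z X))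
    (f : A →ₗ[K] A →ₗ[K] A)
    (hδ1 : ∀ X Y Z : A,
      f X (m Y Z) - f (m X Y) Z - f Y (m X Z)
        + m X (f Y Z) - m (f X Y) Z - m Y (f X Z) = 0)
    (hδ2 : ∀ X Y Z : A,
      f Y (m Z X) - f (m Y Z) X + f (m Y X) Z
        + m Y (f Z X) - m (f Y Z) X + m (f Y X) Z = 0)
    (g : A →ₗ[K] A →ₗ[K] A)
    (hord2a : ∀ X Y Z : A,
      (f X (f Y Z) - f (f X Y) Z) - f Y (f X Z)
        + (g X (m Y Z) - g (m X Y) Z - g Y (m X Z)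
            + m X (g Y Z) - m (g X Y) Z - m Y (g X Z)) = 0)
    (hord2b : ∀ X Y Z : A,
      (f Y (f Z X) - f (f Y Z) X) + f (f Y X) Z
        + (g Y (m Z X) - g (m Y Z) X + g (m Y X) Z
            + m Y (g Z X) - m (g Y Z) X + m (g Y X) Z) = 0)
    (ψ : A → A → A)
    (hψ : ∀ X Y : A, ψ X Y = (2 : K)⁻¹ • (f X Y - f Y X)) :
    ∀ X Y Z : A, m (ψ X Y) Z - m (ψ Z X) Y = 0 :=
  stmt_19_general m hcomm f hδ1 hδ2 ψ hψ
end
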